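/- arXiv:quant-ph/0703237 — 2 statements merged into one kernel-verified Lean document; each statement's English description precedes it below -/
import Mathlib

section
/- For positive definite Hermitian matrices G and G' of the same size, and any density matrix ρ (positive semidefinite with trace 1), the ratio Tr(G'ρ)/Tr(Gρ) is at most the spectral norm of G'G^{-1}. -/
open Matrix
open scoped ComplexOrder
open scoped MatrixOrder

noncomputable def specNorm {n : Type*} [Fintype n] [DecidableEq n] (A : Matrix n n ℂ) : ℝ :=
  ‖(Matrix.toEuclideanCLM (𝕜 := ℂ) A : EuclideanSpace ℂ n →L[ℂ] EuclideanSpace ℂ n)‖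

lemma diag_eq_dot {n : Type*} [Fintype n] [DecidableEq n] (Q : Matrix n n ℂ) (i : n) :
    star (Pi.single i 1) ⬝ᵥ (Q *ᵥ Pi.single i 1) = Q i i := by
  simp [dotProduct, Pi.single_apply, Matrix.mulVec, Finset.mul_sum]

lemma psd_diag_nonneg {n : Type*} [Fintype n] [DecidableEq n] {Q : Matrix n n ℂ}
    (hQ : Q.PosSemidef) (i : n) : 0 ≤ Q i i := by
  have := hQ.dotProduct_mulVec_nonneg (Pi.single i 1)
  rwa [diag_eq_dot] at this

lemma psd_trace_nonneg {n : Type*} [Fintype n] [DecidableEq n] {Q : Matrix n n ℂ}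
    (hQ : Q.PosSemidef) : 0 ≤ Q.trace := by
  rw [Matrix.trace]
  exact Finset.sum_nonneg fun i _ => psd_diag_nonneg hQ i

lemma trace_mul_psd_eq {n : Type*} [Fintype n] [DecidableEq n] (A ρ : Matrix n n ℂ)
    (hρ : ρ.PosSemidef) : (A * ρ).trace = (CFC.sqrt ρ * A * CFC.sqrt ρ).trace := by
  set s := CFC.sqrt ρ with hs
  have h : s * s = ρ := CFC.sqrt_mul_sqrt_self ρ hρ.nonneg
  rw [← h, ← Matrix.mul_assoc, Matrix.trace_mul_comm, ← Matrix.mul_assoc]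

lemma quad_bound {n : Type*} [Fintype n] [DecidableEq n] (M : Matrix n n ℂ) (x : n → ℂ) :
    (star x ⬝ᵥ (M *ᵥ x)).re ≤
      ‖(Matrix.toEuclideanCLM (𝕜 := ℂ) M : EuclideanSpace ℂ n →L[ℂ] EuclideanSpace ℂ n)‖
        * (star x ⬝ᵥ x).re := by
  set e := Matrix.toEuclideanCLM (𝕜 := ℂ) (n := n)
  set x' : EuclideanSpace ℂ n := (WithLp.equiv 2 (n → ℂ)).symm x with hx'
  have h1 : (inner ℂ x' (e M x') : ℂ) = star x ⬝ᵥ (M *ᵥ x) := by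
    show (M *ᵥ x) ⬝ᵥ star x = _; exact dotProduct_comm _ _
  have h2 : (inner ℂ x' x' : ℂ) = star x ⬝ᵥ x := by
    show x ⬝ᵥ star x = _; exact dotProduct_comm _ _
  have h3 : (star x ⬝ᵥ x).re = ‖x'‖ ^ 2 := by
    rw [← h2]
    exact inner_self_eq_norm_sq (𝕜 := ℂ) x'
  calc (star x ⬝ᵥ (M *ᵥ x)).re = (inner ℂ x' (e M x') : ℂ).re := by rw [h1]
    _ ≤ ‖(inner ℂ x' (e M x') : ℂ)‖ := Complex.re_le_norm _
    _ ≤ ‖x'‖ * ‖e M x'‖ := norm_inner_le_norm _ _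
    _ ≤ ‖x'‖ * (‖e M‖ * ‖x'‖) := by
        have := (e M).le_opNorm x'
        have h0 : (0:ℝ) ≤ ‖x'‖ := norm_nonneg _
        nlinarith
    _ = ‖e M‖ * ‖x'‖ ^ 2 := by ring
    _ = ‖e M‖ * (star x ⬝ᵥ x).re := by rw [h3]

lemma specnorm_conj_le {n : Type*} [Fintype n] [DecidableEq n] [Nonempty n]
    (A g : Matrix n n ℂ) (hg : IsUnit g) (hherm : (g⁻¹ * A * g).IsHermitian) :
    ‖(Matrix.toEuclideanCLM (𝕜 := ℂ) (g⁻¹ * A * g) : EuclideanSpace ℂ n →L[ℂ] EuclideanSpace ℂ n)‖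
      ≤ ‖(Matrix.toEuclideanCLM (𝕜 := ℂ) A : EuclideanSpace ℂ n →L[ℂ] EuclideanSpace ℂ n)‖ := by
  set e := Matrix.toEuclideanCLM (𝕜 := ℂ) (n := n)
  have sa : IsSelfAdjoint (e (g⁻¹ * A * g)) := by
    rw [_root_.IsSelfAdjoint, ← map_star]
    exact congrArg e hherm
  have hspec : spectrum ℂ (e (g⁻¹ * A * g)) = spectrum ℂ (e A) := by
    rw [AlgEquiv.spectrum_eq e, AlgEquiv.spectrum_eq e]
    have : g⁻¹ * A * g = (↑hg.unit⁻¹ : Matrix n n ℂ) * A * (↑hg.unit : Matrix n n ℂ) := by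
      rw [Matrix.coe_units_inv, hg.unit_spec]
    rw [this, spectrum.units_conjugate']
  have h1 : (‖e (g⁻¹ * A * g)‖₊ : ENNReal) ≤ (‖e A‖₊ : ENNReal) := by
    rw [← sa.spectralRadius_eq_nnnorm]
    calc spectralRadius ℂ (e (g⁻¹ * A * g)) = spectralRadius ℂ (e A) := by
          unfold spectralRadius; rw [hspec]
      _ ≤ ‖e A‖₊ := spectrum.spectralRadius_le_nnnorm (e A)
  exact_mod_cast ENNReal.coe_le_coe.mp h1

set_option maxHeartbeats 1000000 in
theorem trace_ratio_le_specNorm {n : Type*} [Fintype n] [DecidableEq n]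
    (G G' ρ : Matrix n n ℂ) (hG : G.PosDef) (hG' : G'.PosDef)
    (hρ : ρ.PosSemidef) (hρ1 : ρ.trace = 1) :
    (G' * ρ).trace.re / (G * ρ).trace.re ≤ specNorm (G' * G⁻¹) := by
  rcases isEmpty_or_nonempty n with hn | hn
  · rw [Matrix.trace, Finset.univ_eq_empty, Finset.sum_empty] at hρ1
    exact absurd hρ1 zero_ne_one
  set e := Matrix.toEuclideanCLM (𝕜 := ℂ) (n := n)
  set c : ℝ := specNorm (G' * G⁻¹) with hc
  -- square root of G
  set g := CFC.sqrt G with hgdef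
  have hgH : g.IsHermitian := (Matrix.nonneg_iff_posSemidef.mp (CFC.sqrt_nonneg G)).isHermitian
  have hgg : g * g = G := CFC.sqrt_mul_sqrt_self G hG.posSemidef.nonneg
  have hgdet : IsUnit g.det := by
    have hGdet : IsUnit G.det := (Matrix.isUnit_iff_isUnit_det G).mp hG.isUnit
    rw [← hgg, Matrix.det_mul] at hGdet
    exact isUnit_of_mul_isUnit_left hGdet
  have hgu : IsUnit g := (Matrix.isUnit_iff_isUnit_det g).mpr hgdet
  have hg1 : g⁻¹ * g = 1 := Matrix.nonsing_inv_mul g hgdet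
  have hg2 : g * g⁻¹ = 1 := Matrix.mul_nonsing_inv g hgdet
  have hgiH : g⁻¹.IsHermitian := hgH.inv
  set M : Matrix n n ℂ := g⁻¹ * G' * g⁻¹ with hMdef
  have hM_psd : M.PosSemidef := by
    have := hG'.posSemidef.conjTranspose_mul_mul_same (B := g⁻¹)
    rwa [hgiH.eq] at this
  have hM_eq : g⁻¹ * (G' * G⁻¹) * g = M := by
    rw [← hgg, Matrix.mul_inv_rev]
    calc g⁻¹ * (G' * (g⁻¹ * g⁻¹)) * g = g⁻¹ * G' * g⁻¹ * (g⁻¹ * g) := by noncomm_ring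
      _ = M := by rw [hg1, Matrix.mul_one]
  have hnorm : ‖e M‖ ≤ c := by
    have := specnorm_conj_le (G' * G⁻¹) g hgu (by rw [hM_eq]; exact hM_psd.isHermitian)
    rwa [hM_eq] at this
  have key : ∀ x : n → ℂ, (star x ⬝ᵥ (M *ᵥ x)).re ≤ c * (star x ⬝ᵥ x).re := by
    intro x
    have h1 := quad_bound M x
    have h2 : 0 ≤ (star x ⬝ᵥ x).re := by
      have := dotProduct_star_self_nonneg (R := ℂ) x
      simpa using (Complex.le_def.mp this).1
    nlinarith [mul_le_mul_of_nonneg_right hnorm h2]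
  have hQpsd : ((c : ℂ) • (1 : Matrix n n ℂ) - M).PosSemidef := by
    refine Matrix.PosSemidef.of_dotProduct_mulVec_nonneg ?_ ?_
    · simp [Matrix.IsHermitian, Matrix.conjTranspose_sub, Matrix.conjTranspose_smul,
        Matrix.conjTranspose_one, hM_psd.isHermitian.eq, Complex.star_def, Complex.conj_ofReal]
    · intro x
      have hm := hM_psd.dotProduct_mulVec_nonneg x
      have hmre : 0 ≤ (star x ⬝ᵥ (M *ᵥ x)).re := by simpa using (Complex.le_def.mp hm).1
      have hmim : (star x ⬝ᵥ (M *ᵥ x)).im = 0 := by simpa using (Complex.le_def.mp hm).2.symm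
      have hd := dotProduct_star_self_nonneg (R := ℂ) x
      have hdim : (star x ⬝ᵥ x).im = 0 := by simpa using (Complex.le_def.mp hd).2.symm
      have hexp : star x ⬝ᵥ (((c : ℂ) • (1 : Matrix n n ℂ) - M) *ᵥ x)
          = (c : ℂ) * (star x ⬝ᵥ x) - star x ⬝ᵥ (M *ᵥ x) := by
        rw [Matrix.sub_mulVec, dotProduct_sub, Matrix.smul_mulVec,
          Matrix.one_mulVec, dotProduct_smul, smul_eq_mul]
      rw [hexp, Complex.le_def]
      constructor
      · simp only [Complex.zero_re, Complex.sub_re, Complex.mul_re, Complex.ofReal_re,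
          Complex.ofReal_im, zero_mul, sub_zero, hdim, mul_zero]
        linarith [key x]
      · simp [Complex.sub_im, Complex.mul_im, hdim, hmim]
  have hP : ((c : ℂ) • G - G').PosSemidef := by
    have h := hQpsd.conjTranspose_mul_mul_same (B := g)
    have heq : gᴴ * ((c : ℂ) • (1 : Matrix n n ℂ) - M) * g = (c : ℂ) • G - G' := by
      rw [hgH.eq, Matrix.mul_sub, Matrix.sub_mul]
      congr 1
      · rw [Matrix.mul_smul, Matrix.mul_one, Matrix.smul_mul, hgg]
      · calc g * M * g = g * g⁻¹ * G' * (g⁻¹ * g) := by rw [hMdef]; noncomm_ring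
          _ = G' := by rw [hg1, hg2, Matrix.one_mul, Matrix.mul_one]
    rwa [heq] at h
  set s := CFC.sqrt ρ with hsdef
  have hsH : s.IsHermitian := (Matrix.nonneg_iff_posSemidef.mp (CFC.sqrt_nonneg ρ)).isHermitian
  have htr : (((c : ℂ) • G - G') * ρ).trace
      = (c : ℂ) * (G * ρ).trace - (G' * ρ).trace := by
    rw [Matrix.sub_mul, Matrix.trace_sub, Matrix.smul_mul, Matrix.trace_smul, smul_eq_mul]
  have hnn : 0 ≤ (((c : ℂ) • G - G') * ρ).trace := by
    rw [trace_mul_psd_eq _ ρ hρ]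
    refine psd_trace_nonneg ?_
    have := hP.conjTranspose_mul_mul_same (B := s)
    rwa [hsH.eq] at this
  have h2 : (G' * ρ).trace.re ≤ c * (G * ρ).trace.re := by
    rw [htr] at hnn
    have := (Complex.le_def.mp hnn).1
    simp only [Complex.zero_re, Complex.sub_re, Complex.mul_re, Complex.ofReal_re,
      Complex.ofReal_im, zero_mul, sub_zero] at this
    linarith
  have hQG : (s * G * s).PosSemidef := by
    have := hG.posSemidef.conjTranspose_mul_mul_same (B := s)
    rwa [hsH.eq] at this
  have htrG : (G * ρ).trace = (s * G * s).trace := trace_mul_psd_eq G ρ hρ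
  have h3 : 0 < (G * ρ).trace.re := by
    by_contra hcon
    push_neg at hcon
    have hge : 0 ≤ (s * G * s).trace := psd_trace_nonneg hQG
    have hre0 : (s * G * s).trace.re = 0 :=
      le_antisymm (by rw [← htrG]; exact hcon) (by simpa using (Complex.le_def.mp hge).1)
    have hdiag : ∀ i, ((s * G * s) i i).re = 0 := by
      have hnn' : ∀ j, 0 ≤ ((s * G * s) j j).re := fun j => by
        simpa using (Complex.le_def.mp (psd_diag_nonneg hQG j)).1
      have hsum : ∑ j, ((s * G * s) j j).re = 0 := by
        have h' : (∑ j, (s * G * s) j j).re = 0 := hre0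
        rw [Complex.re_sum] at h'
        exact h'
      intro i
      exact (Finset.sum_eq_zero_iff_of_nonneg (fun j _ => hnn' j)).mp hsum i (Finset.mem_univ i)
    have hcols : ∀ i, s *ᵥ Pi.single i 1 = 0 := by
      intro i
      by_contra hne
      have hpos := hG.re_dotProduct_pos (x := s *ᵥ Pi.single i 1) hne
      have hrel : star (s *ᵥ Pi.single i 1) ⬝ᵥ (G *ᵥ (s *ᵥ Pi.single i 1))
          = (s * G * s) i i := by
        calc star (s *ᵥ Pi.single i 1) ⬝ᵥ (G *ᵥ (s *ᵥ Pi.single i 1))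
            = (star (Pi.single i 1) ᵥ* s) ⬝ᵥ (G *ᵥ (s *ᵥ Pi.single i 1)) := by
              rw [Matrix.star_mulVec, hsH.eq]
          _ = star (Pi.single i 1) ⬝ᵥ (s *ᵥ (G *ᵥ (s *ᵥ Pi.single i 1))) :=
              (Matrix.dotProduct_mulVec _ s _).symm
          _ = star (Pi.single i 1) ⬝ᵥ ((s * G * s) *ᵥ Pi.single i 1) := by
              rw [Matrix.mulVec_mulVec, Matrix.mulVec_mulVec]
          _ = (s * G * s) i i := diag_eq_dot _ i
      rw [hrel] at hpos
      have : (0:ℝ) < ((s * G * s) i i).re := by simpa using hpos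
      rw [hdiag i] at this
      exact lt_irrefl 0 this
    have hs0 : s = 0 := by
      ext i j
      have := congrFun (hcols j) i
      simpa [Matrix.mulVec_single] using this
    have hρ0 : ρ = 0 := by
      rw [← CFC.sqrt_mul_sqrt_self ρ hρ.nonneg, ← hsdef, hs0, Matrix.mul_zero]
    rw [hρ0] at hρ1
    simp [Matrix.trace] at hρ1
  rw [div_le_iff₀ h3]
  exact h2
end

section
/- Let X = {x ∈ {0,1}ⁿ : |x| = 1}, v = (1,...,1)/√n ∈ ℝ^X, q > 1, Γ = (1−q)|v⟩⟨v| + qI, and D_i[x,y] = 1 iff x_i ≠ y_i for x,y ∈ X. Then for each i, ‖Γ ∘ D_i‖ = √(n−1)·(q−1)/n, where ∘ is the Hadamard product and ‖·‖ the spectral norm. -/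
open Matrix Finset
open scoped ComplexOrder

lemma toEuclideanCLM_apply' {n : ℕ} (A : Matrix (Fin n) (Fin n) ℂ)
    (x : EuclideanSpace ℂ (Fin n)) (j : Fin n) :
    (Matrix.toEuclideanCLM (𝕜 := ℂ) A x) j = ∑ k, A j k * x k := by
  have := congrFun (Matrix.ofLp_toEuclideanCLM (𝕜 := ℂ) A x) j
  rw [show (Matrix.toEuclideanCLM (𝕜 := ℂ) A x) j = _ from this, Matrix.mulVec, dotProduct]

theorem specNorm_hadamard_search (n : ℕ) (hn : 2 ≤ n) (q : ℝ) (hq : 1 < q) (i : Fin n)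
    (Γ D : Matrix (Fin n) (Fin n) ℂ)
    (hΓ : Γ = (((1 - q) / n : ℂ)) • Matrix.of (fun _ _ => (1 : ℂ)) + (q : ℂ) • 1)
    (hD : ∀ j k, D j k = if (j = i ∧ k ≠ i) ∨ (j ≠ i ∧ k = i) then 1 else 0) :
    specNorm (Matrix.hadamard Γ D) = Real.sqrt ((n : ℝ) - 1) * (q - 1) / n := by
  have hn0 : (0:ℝ) < n := by positivity
  have hn1 : (1:ℝ) ≤ (n:ℝ) - 1 := by
    have : (2:ℝ) ≤ n := by exact_mod_cast hn
    linarith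
  have hn1' : (0:ℝ) ≤ (n:ℝ) - 1 := by linarith
  set c : ℂ := ((1 - q) / n : ℂ) with hc
  have hnormc : ‖c‖ = (q - 1) / n := by
    rw [hc]
    have : ((1 : ℂ) - q) / n = (((1 - q)/n : ℝ) : ℂ) := by push_cast; ring
    rw [this, Complex.norm_real, Real.norm_eq_abs, abs_div, abs_of_nonneg hn0.le,
      abs_of_nonpos (by linarith : (1:ℝ) - q ≤ 0)]
    ring
  set s : ℝ := Real.sqrt ((n:ℝ) - 1) with hsdef
  have hs2 : s ^ 2 = (n:ℝ) - 1 := Real.sq_sqrt hn1'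
  have hs0 : 0 < s := Real.sqrt_pos.mpr (by linarith)
  -- entries of the hadamard product
  have hA : ∀ j k, (Matrix.hadamard Γ D) j k =
      if (j = i ∧ k ≠ i) ∨ (j ≠ i ∧ k = i) then c else 0 := by
    intro j k
    rw [Matrix.hadamard_apply, hΓ, hD]
    by_cases h : (j = i ∧ k ≠ i) ∨ (j ≠ i ∧ k = i)
    · have hjk : j ≠ k := by rintro rfl; tauto
      simp [h, Matrix.one_apply, hjk]
    · simp [h]
  set T := (Matrix.toEuclideanCLM (𝕜 := ℂ) (Matrix.hadamard Γ D)) with hT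
  have hcard : (univ.erase i).card = n - 1 := by
    rw [Finset.card_erase_of_mem (mem_univ i), Finset.card_univ, Fintype.card_fin]
  have hcardR : ((univ.erase i).card : ℝ) = (n:ℝ) - 1 := by
    rw [hcard]; have : 1 ≤ n := by omega
    push_cast [this]; ring
  -- formula for T x
  have hTx : ∀ (x : EuclideanSpace ℂ (Fin n)) (j : Fin n),
      (T x) j = if j = i then c * ∑ k ∈ univ.erase i, x k else c * x i := by
    intro x j
    rw [hT, toEuclideanCLM_apply']
    by_cases hj : j = i
    · subst hj
      simp only [if_pos rfl, Finset.mul_sum]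
      rw [← Finset.sum_subset (Finset.subset_univ (univ.erase j))]
      · apply Finset.sum_congr rfl
        intro k hk
        rw [hA]
        have hki : k ≠ j := by simpa using (Finset.mem_erase.mp hk).1
        simp [hki]
      · intro k _ hk
        have : k = j := by simpa using hk
        subst this
        rw [hA]; simp
    · rw [if_neg hj, Finset.sum_eq_single i]
      · rw [hA]; simp [hj]
      · intro k _ hk
        rw [hA]
        simp [hj, hk]
      · simp
  -- squared norm formula
  have hnormsq : ∀ (x : EuclideanSpace ℂ (Fin n)),
      ‖T x‖^2 = ‖c‖^2 * (‖∑ k ∈ univ.erase i, x k‖^2 + ((n:ℝ)-1) * ‖x i‖^2) := by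
    intro x
    rw [EuclideanSpace.norm_eq, Real.sq_sqrt (Finset.sum_nonneg fun _ _ => sq_nonneg _)]
    rw [← Finset.add_sum_erase _ _ (mem_univ i)]
    have h1 : ‖(T x) i‖^2 = ‖c‖^2 * ‖∑ k ∈ univ.erase i, x k‖^2 := by
      rw [hTx, if_pos rfl, norm_mul]; ring
    have h2 : ∀ j ∈ univ.erase i, ‖(T x) j‖^2 = ‖c‖^2 * ‖x i‖^2 := by
      intro j hj
      rw [hTx, if_neg (Finset.mem_erase.mp hj).1, norm_mul]; ring
    rw [h1, Finset.sum_congr rfl h2, Finset.sum_const, nsmul_eq_mul, hcardR]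
    ring
  have hxsq : ∀ (x : EuclideanSpace ℂ (Fin n)),
      ‖x‖^2 = ‖x i‖^2 + ∑ k ∈ univ.erase i, ‖x k‖^2 := by
    intro x
    rw [EuclideanSpace.norm_eq, Real.sq_sqrt (Finset.sum_nonneg fun _ _ => sq_nonneg _),
      ← Finset.add_sum_erase _ _ (mem_univ i)]
  set K : ℝ := s * (q - 1) / n with hK
  have hK0 : 0 ≤ K := by
    apply div_nonneg _ hn0.le
    apply mul_nonneg hs0.le (by linarith)
  apply le_antisymm
  · -- upper bound
    apply ContinuousLinearMap.opNorm_le_bound _ hK0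
    intro x
    have hb : ‖T x‖^2 ≤ (K * ‖x‖)^2 := by
      rw [hnormsq]
      have hcs : ‖∑ k ∈ univ.erase i, x k‖^2 ≤ ((n:ℝ)-1) * ∑ k ∈ univ.erase i, ‖x k‖^2 := by
        calc ‖∑ k ∈ univ.erase i, x k‖^2 ≤ (∑ k ∈ univ.erase i, ‖x k‖)^2 := by
              apply pow_le_pow_left₀ (norm_nonneg _) (norm_sum_le _ _)
          _ ≤ ((univ.erase i).card : ℝ) * ∑ k ∈ univ.erase i, ‖x k‖^2 :=
              sq_sum_le_card_mul_sum_sq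
          _ = ((n:ℝ)-1) * ∑ k ∈ univ.erase i, ‖x k‖^2 := by rw [hcardR]
      have hKsq : (K * ‖x‖)^2 = ‖c‖^2 * (((n:ℝ)-1) * (‖x i‖^2 + ∑ k ∈ univ.erase i, ‖x k‖^2)) := by
        have e : (K * ‖x‖)^2 = s^2 * (((q-1)/(n:ℝ))^2 * ‖x‖^2) := by rw [hK]; ring
        rw [e, hs2, hnormc, hxsq]; ring
      rw [hKsq]
      nlinarith [norm_nonneg c, sq_nonneg (‖x i‖), hn1']
    calc ‖T x‖ = Real.sqrt (‖T x‖^2) := (Real.sqrt_sq (norm_nonneg _)).symm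
      _ ≤ Real.sqrt ((K * ‖x‖)^2) := Real.sqrt_le_sqrt hb
      _ = K * ‖x‖ := Real.sqrt_sq (by positivity)
  · -- lower bound via eigenvector
    set z : EuclideanSpace ℂ (Fin n) :=
      (WithLp.equiv 2 (Fin n → ℂ)).symm (fun k => if k = i then (s:ℂ) else 1) with hzdef
    have hz : ∀ k, z k = if k = i then (s:ℂ) else 1 := fun k => rfl
    have hsum : ∑ k ∈ univ.erase i, z k = ((n:ℝ) - 1 : ℂ) := by
      rw [Finset.sum_congr rfl (fun k hk => by
        rw [hz, if_neg (Finset.mem_erase.mp hk).1]), Finset.sum_const, nsmul_eq_mul, hcard]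
      have h1 : 1 ≤ n := by omega
      push_cast [h1]
      ring
    have hTz : T z = (c * (s:ℂ)) • z := by
      ext j
      rw [PiLp.smul_apply, hTx]
      by_cases hj : j = i
      · subst hj
        rw [if_pos rfl, hsum, hz j, if_pos rfl, smul_eq_mul]
        have h : ((s:ℂ)) * (s:ℂ) = ((n:ℝ) - 1 : ℂ) := by
          calc ((s:ℂ)) * (s:ℂ) = ((s^2 : ℝ) : ℂ) := by push_cast; ring
            _ = ((n:ℝ) - 1 : ℂ) := by rw [hs2]; push_cast; ring
        rw [mul_assoc, h]
      · rw [if_neg hj, hz i, if_pos rfl, hz j, if_neg hj, smul_eq_mul, mul_one]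
    have hz0 : z ≠ 0 := by
      intro h
      have : z i = 0 := by rw [h]; rfl
      rw [hz, if_pos rfl] at this
      exact (ne_of_gt hs0) (Complex.ofReal_eq_zero.mp this)
    have hzpos : 0 < ‖z‖ := norm_pos_iff.mpr hz0
    have hle := T.le_opNorm z
    rw [hTz, norm_smul] at hle
    have hcs : ‖c * (s:ℂ)‖ = K := by
      rw [norm_mul, hnormc, Complex.norm_real, Real.norm_eq_abs, abs_of_pos hs0, hK]
      ring
    rw [hcs] at hle
    exact le_of_mul_le_mul_right hle hzpos
end
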